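/- arXiv:2504.10396 — 3 statements merged into one kernel-verified Lean document; each statement's English description precedes it below -/
import Mathlib

section
/- Let p be an odd prime. There is no bijection between the multiset of in-degrees of the quiver on (Z/p²Z)² with edges (x,y) → (px,py) and the multiset of in-degrees of the quiver on {(x,y,z) ∈ (Z/p²Z)³ : px = py = pz} with edges (x,y,z) → (px,py,pz); concretely, the first quiver has p² vertices of in-degree p² (all others of in-degree 0), while the second has p vertices of in-degree p³ (all others of in-degree 0). Since p² ≠ p and p² ≠ p³ for p > 1, the two quivers are not isomorphic as directed graphs, even though both have p⁴ vertices. -/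
namespace QuiversNotIso

/-- The injection `Fin p → ZMod (p^2)` onto the multiples of `p`. -/
def ψ (p : ℕ) (i : Fin p) : ZMod (p ^ 2) := ((p * i : ℕ) : ZMod (p ^ 2))

lemma psi_eq (p : ℕ) (i : Fin p) : ψ p i = (p : ZMod (p ^ 2)) * ((i : ℕ) : ZMod (p ^ 2)) := by
  simp [ψ]

lemma psi_inj {p : ℕ} (hp : p.Prime) : Function.Injective (ψ p) := by
  haveI : NeZero (p ^ 2) := ⟨pow_ne_zero 2 hp.ne_zero⟩
  intro i j h
  have hi : p * (i : ℕ) < p ^ 2 := by have := i.2; nlinarith [hp.pos]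
  have hj : p * (j : ℕ) < p ^ 2 := by have := j.2; nlinarith [hp.pos]
  have := congrArg ZMod.val h
  rw [ψ, ψ, ZMod.val_cast_of_lt hi, ZMod.val_cast_of_lt hj] at this
  exact Fin.ext (Nat.eq_of_mul_eq_mul_left hp.pos this)

lemma pp_zero {p : ℕ} : (p : ZMod (p ^ 2)) * (p : ZMod (p ^ 2)) = 0 := by
  rw [← Nat.cast_mul, ← pow_two, ZMod.natCast_self]

lemma p_mul_psi {p : ℕ} (i : Fin p) : (p : ZMod (p ^ 2)) * ψ p i = 0 := by
  rw [psi_eq, ← mul_assoc, pp_zero, zero_mul]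

lemma mem_ker_iff {p : ℕ} (hp : p.Prime) (a : ZMod (p ^ 2)) :
    (p : ZMod (p ^ 2)) * a = 0 ↔ ∃ i : Fin p, a = ψ p i := by
  haveI : NeZero (p ^ 2) := ⟨pow_ne_zero 2 hp.ne_zero⟩
  constructor
  · intro h
    have ha : ((a.val : ℕ) : ZMod (p ^ 2)) = a := ZMod.natCast_rightInverse a
    rw [← ha, ← Nat.cast_mul, ZMod.natCast_eq_zero_iff] at h
    obtain ⟨m, hm'⟩ := h
    have hm : a.val = p * m := Nat.eq_of_mul_eq_mul_left hp.pos (by rw [hm']; ring)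
    have hlt : m < p := by
      have hv : a.val < p ^ 2 := ZMod.val_lt a
      rw [hm, pow_two] at hv
      exact lt_of_mul_lt_mul_left hv (Nat.zero_le p)
    exact ⟨⟨m, hlt⟩, by rw [← ha, hm]; rfl⟩
  · rintro ⟨i, rfl⟩
    exact p_mul_psi i

end QuiversNotIso

/-- The quiver on (ℤ/p²ℤ)² with edges (x,y) → (px,py) is not isomorphic (as a directed
graph) to the quiver on {(x,y,z) : px = py = pz} with edges (x,y,z) → (px,py,pz),
even though both have p⁴ vertices. -/
theorem quivers_not_isomorphic (p : ℕ) (hp : p.Prime) (hodd : Odd p) :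
    Nat.card (ZMod (p ^ 2) × ZMod (p ^ 2)) = p ^ 4 ∧
    Nat.card {w : ZMod (p ^ 2) × ZMod (p ^ 2) × ZMod (p ^ 2) //
      (p : ZMod (p ^ 2)) * w.1 = (p : ZMod (p ^ 2)) * w.2.1 ∧
      (p : ZMod (p ^ 2)) * w.2.1 = (p : ZMod (p ^ 2)) * w.2.2} = p ^ 4 ∧
    ¬ ∃ f : (ZMod (p ^ 2) × ZMod (p ^ 2)) ≃
        {w : ZMod (p ^ 2) × ZMod (p ^ 2) × ZMod (p ^ 2) //
          (p : ZMod (p ^ 2)) * w.1 = (p : ZMod (p ^ 2)) * w.2.1 ∧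
          (p : ZMod (p ^ 2)) * w.2.1 = (p : ZMod (p ^ 2)) * w.2.2},
      ∀ v v' : ZMod (p ^ 2) × ZMod (p ^ 2),
        (((p : ZMod (p ^ 2)) * v.1, (p : ZMod (p ^ 2)) * v.2) = v') ↔
        (((p : ZMod (p ^ 2)) * (f v).1.1, (p : ZMod (p ^ 2)) * (f v).1.2.1,
          (p : ZMod (p ^ 2)) * (f v).1.2.2) = (f v').1) := by
  classical
  haveI : NeZero (p ^ 2) := ⟨pow_ne_zero 2 hp.ne_zero⟩
  open QuiversNotIso in
  -- cardinality of the kernel of multiplication by p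
  have hK : Nat.card {a : ZMod (p ^ 2) // (p : ZMod (p ^ 2)) * a = 0} = p := by
    have e : {a : ZMod (p ^ 2) // (p : ZMod (p ^ 2)) * a = 0} ≃
        Set.range (QuiversNotIso.ψ p) :=
      Equiv.subtypeEquivRight fun a => by
        rw [QuiversNotIso.mem_ker_iff hp]
        exact ⟨fun ⟨i, hi⟩ => ⟨i, hi.symm⟩, fun ⟨i, hi⟩ => ⟨i, hi.symm⟩⟩
    rw [Nat.card_congr e,
      Nat.card_range_of_injective (QuiversNotIso.psi_inj hp)]
    simp
  have hcard1 : Nat.card (ZMod (p ^ 2) × ZMod (p ^ 2)) = p ^ 4 := by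
    rw [Nat.card_prod, Nat.card_zmod]; ring
  have e2 : {w : ZMod (p ^ 2) × ZMod (p ^ 2) × ZMod (p ^ 2) //
      (p : ZMod (p ^ 2)) * w.1 = (p : ZMod (p ^ 2)) * w.2.1 ∧
      (p : ZMod (p ^ 2)) * w.2.1 = (p : ZMod (p ^ 2)) * w.2.2} ≃
      ZMod (p ^ 2) × {a : ZMod (p ^ 2) // (p : ZMod (p ^ 2)) * a = 0} ×
        {a : ZMod (p ^ 2) // (p : ZMod (p ^ 2)) * a = 0} :=
    { toFun := fun w => (w.1.1,
        ⟨w.1.2.1 - w.1.1, by rw [mul_sub, ← w.2.1, sub_self]⟩,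
        ⟨w.1.2.2 - w.1.2.1, by rw [mul_sub, ← w.2.2, sub_self]⟩)
      invFun := fun x => ⟨(x.1, x.1 + x.2.1.1, x.1 + x.2.1.1 + x.2.2.1),
        by simp [mul_add, x.2.1.2, x.2.2.2], by simp [mul_add, x.2.1.2, x.2.2.2]⟩
      left_inv := fun w => Subtype.ext (by
        obtain ⟨⟨x, y, z⟩, h⟩ := w
        simp)
      right_inv := fun x => by
        obtain ⟨x, ⟨a, ha⟩, ⟨b, hb⟩⟩ := x
        simp }
  have hcard2 : Nat.card {w : ZMod (p ^ 2) × ZMod (p ^ 2) × ZMod (p ^ 2) //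
      (p : ZMod (p ^ 2)) * w.1 = (p : ZMod (p ^ 2)) * w.2.1 ∧
      (p : ZMod (p ^ 2)) * w.2.1 = (p : ZMod (p ^ 2)) * w.2.2} = p ^ 4 := by
    rw [Nat.card_congr e2, Nat.card_prod, Nat.card_prod, Nat.card_zmod, hK]; ring
  refine ⟨hcard1, hcard2, ?_⟩
  rintro ⟨f, hf⟩
  -- the edge maps
  set E : ZMod (p ^ 2) × ZMod (p ^ 2) → ZMod (p ^ 2) × ZMod (p ^ 2) :=
    fun v => ((p : ZMod (p ^ 2)) * v.1, (p : ZMod (p ^ 2)) * v.2) with hE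
  have hzero : ∀ a : ZMod (p ^ 2), (p : ZMod (p ^ 2)) * ((p : ZMod (p ^ 2)) * a) = 0 := by
    intro a; rw [← mul_assoc, QuiversNotIso.pp_zero, zero_mul]
  set E' : {w : ZMod (p ^ 2) × ZMod (p ^ 2) × ZMod (p ^ 2) //
      (p : ZMod (p ^ 2)) * w.1 = (p : ZMod (p ^ 2)) * w.2.1 ∧
      (p : ZMod (p ^ 2)) * w.2.1 = (p : ZMod (p ^ 2)) * w.2.2} →
      {w : ZMod (p ^ 2) × ZMod (p ^ 2) × ZMod (p ^ 2) //
      (p : ZMod (p ^ 2)) * w.1 = (p : ZMod (p ^ 2)) * w.2.1 ∧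
      (p : ZMod (p ^ 2)) * w.2.1 = (p : ZMod (p ^ 2)) * w.2.2} :=
    fun w => ⟨((p : ZMod (p ^ 2)) * w.1.1, (p : ZMod (p ^ 2)) * w.1.2.1,
        (p : ZMod (p ^ 2)) * w.1.2.2),
      by rw [hzero, hzero], by rw [hzero, hzero]⟩ with hE'
  have hcomm : ∀ v, f (E v) = E' (f v) := by
    intro v
    have := (hf v (E v)).mp rfl
    exact Subtype.ext this.symm
  -- images of the edge maps
  have hS1 : Set.range E = Set.range
      (fun ij : Fin p × Fin p => (QuiversNotIso.ψ p ij.1, QuiversNotIso.ψ p ij.2)) := by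
    ext ⟨a, b⟩
    constructor
    · rintro ⟨⟨x, y⟩, h⟩
      have ha : a = (p : ZMod (p ^ 2)) * x := (congrArg Prod.fst h).symm
      have hb : b = (p : ZMod (p ^ 2)) * y := (congrArg Prod.snd h).symm
      obtain ⟨i, hi⟩ := (QuiversNotIso.mem_ker_iff hp a).mp (by rw [ha, hzero])
      obtain ⟨j, hj⟩ := (QuiversNotIso.mem_ker_iff hp b).mp (by rw [hb, hzero])
      exact ⟨(i, j), by show (QuiversNotIso.ψ p i, QuiversNotIso.ψ p j) = (a, b)
                        rw [← hi, ← hj]⟩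
    · rintro ⟨⟨i, j⟩, h⟩
      refine ⟨(((i : ℕ) : ZMod (p ^ 2)), ((j : ℕ) : ZMod (p ^ 2))), ?_⟩
      rw [← h, hE]
      simp [QuiversNotIso.psi_eq]
  set χ : Fin p → {w : ZMod (p ^ 2) × ZMod (p ^ 2) × ZMod (p ^ 2) //
      (p : ZMod (p ^ 2)) * w.1 = (p : ZMod (p ^ 2)) * w.2.1 ∧
      (p : ZMod (p ^ 2)) * w.2.1 = (p : ZMod (p ^ 2)) * w.2.2} :=
    fun i => ⟨(QuiversNotIso.ψ p i, QuiversNotIso.ψ p i, QuiversNotIso.ψ p i),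
      rfl, rfl⟩ with hχ
  have hS2 : Set.range E' = Set.range χ := by
    ext w
    constructor
    · rintro ⟨u, rfl⟩
      obtain ⟨i, hi⟩ := (QuiversNotIso.mem_ker_iff hp
        ((p : ZMod (p ^ 2)) * u.1.1)).mp (hzero _)
      refine ⟨i, Subtype.ext ?_⟩
      show (QuiversNotIso.ψ p i, QuiversNotIso.ψ p i, QuiversNotIso.ψ p i)
        = ((p : ZMod (p ^ 2)) * u.1.1, (p : ZMod (p ^ 2)) * u.1.2.1,
          (p : ZMod (p ^ 2)) * u.1.2.2)
      rw [← hi, ← u.2.1, ← u.2.2, ← u.2.1]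
    · rintro ⟨i, rfl⟩
      refine ⟨⟨(((i : ℕ) : ZMod (p ^ 2)), ((i : ℕ) : ZMod (p ^ 2)),
        ((i : ℕ) : ZMod (p ^ 2))), rfl, rfl⟩, Subtype.ext ?_⟩
      show ((p : ZMod (p ^ 2)) * ((i : ℕ) : ZMod (p ^ 2)),
        (p : ZMod (p ^ 2)) * ((i : ℕ) : ZMod (p ^ 2)),
        (p : ZMod (p ^ 2)) * ((i : ℕ) : ZMod (p ^ 2))) = _
      rw [hχ]
      simp [QuiversNotIso.psi_eq]
  -- f carries the image of E onto the image of E'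
  have himg : f '' Set.range E = Set.range E' := by
    ext w
    constructor
    · rintro ⟨v', ⟨v, rfl⟩, rfl⟩
      exact ⟨f v, (hcomm v).symm⟩
    · rintro ⟨u, rfl⟩
      refine ⟨E (f.symm u), ⟨f.symm u, rfl⟩, ?_⟩
      rw [hcomm (f.symm u), Equiv.apply_symm_apply]
  have hc1 : Nat.card (Set.range E) = p * p := by
    rw [hS1, Nat.card_range_of_injective (f := fun ij : Fin p × Fin p =>
      (QuiversNotIso.ψ p ij.1, QuiversNotIso.ψ p ij.2)) ?_]
    · simp
    · intro a b hab
      have h1 := congrArg Prod.fst hab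
      have h2 := congrArg Prod.snd hab
      exact Prod.ext (QuiversNotIso.psi_inj hp h1) (QuiversNotIso.psi_inj hp h2)
  have hc2 : Nat.card (Set.range E') = p := by
    rw [hS2, Nat.card_range_of_injective (f := χ) ?_]
    · simp
    · intro a b hab
      have := congrArg (fun w => w.1.1) hab
      exact QuiversNotIso.psi_inj hp this
  have hcongr : Nat.card (Set.range E) = Nat.card (Set.range E') := by
    rw [← himg]
    exact Nat.card_congr (Equiv.Set.image f (Set.range E) f.injective)
  rw [hc1, hc2] at hcongr
  have : p = 1 := Nat.eq_of_mul_eq_mul_left hp.pos (by rw [mul_one]; exact hcongr)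
  exact absurd this hp.one_lt.ne'
end

section
/- For b ≥ 2, the quiver on (Z/4Z)^b with edges x → 2x is not isomorphic to the quiver on {x ∈ (Z/4Z)^{2b−1} : all coordinates share parity} with edges x → 2x, even though both have 4^b vertices: the first has 2^b vertices of positive in-degree while the second has exactly 2, and 2^b > 2 for b ≥ 2. -/
/-- Encode a parity bit and a high bit into `ZMod 4`. -/
def encZ4 (p s : ZMod 2) : ZMod 4 := ((p.val + 2 * s.val : ℕ) : ZMod 4)

lemma encZ4_parity : ∀ p s : ZMod 2, (encZ4 p s).val % 2 = p.val := by decide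

lemma encZ4_lo : ∀ p s : ZMod 2, (((encZ4 p s).val : ℕ) : ZMod 2) = p := by decide

lemma encZ4_hi : ∀ p s : ZMod 2, (((encZ4 p s).val / 2 : ℕ) : ZMod 2) = s := by decide

lemma encZ4_dec : ∀ a c : ZMod 4, a.val % 2 = c.val % 2 →
    encZ4 ((c.val : ℕ) : ZMod 2) (((a.val / 2 : ℕ) : ZMod 2)) = a := by decide

lemma two_mul_eq_of_parity : ∀ a c : ZMod 4, a.val % 2 = c.val % 2 → 2 * a = 2 * c := by
  decide

lemma two_mul_zero_or_two : ∀ a : ZMod 4, 2 * a = 0 ∨ 2 * a = 2 := by decide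

/-- The same-parity tuples are in bijection with a parity bit plus a tuple of high bits. -/
def parityEquiv (n : ℕ) (hn : 0 < n) :
    (ZMod 2 × (Fin n → ZMod 2)) ≃
      {x : Fin n → ZMod 4 // ∀ i j, (x i).val % 2 = (x j).val % 2} where
  toFun := fun ps => ⟨fun i => encZ4 ps.1 (ps.2 i), fun i j => by
    rw [encZ4_parity, encZ4_parity]⟩
  invFun := fun x => ((((x.1 ⟨0, hn⟩).val : ℕ) : ZMod 2),
    fun i => (((x.1 i).val / 2 : ℕ) : ZMod 2))
  left_inv := fun ps => by
    refine Prod.ext ?_ ?_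
    · exact encZ4_lo ps.1 (ps.2 _)
    · funext i; exact encZ4_hi ps.1 (ps.2 i)
  right_inv := fun x => by
    apply Subtype.ext
    funext i
    exact encZ4_dec _ _ (x.2 i ⟨0, hn⟩)

/-- For b ≥ 2, the quiver on (ℤ/4ℤ)^b with edges x → 2x is not isomorphic to the quiver
on the same-parity tuples in (ℤ/4ℤ)^{2b−1} with edges x → 2x, although both have 4^b
vertices. -/
theorem doubling_quivers_not_isomorphic (b : ℕ) (hb : 2 ≤ b) :
    Nat.card (Fin b → ZMod 4) = 4 ^ b ∧
    Nat.card {x : Fin (2 * b - 1) → ZMod 4 //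
      ∀ i j, (x i).val % 2 = (x j).val % 2} = 4 ^ b ∧
    ¬ ∃ f : (Fin b → ZMod 4) ≃
        {x : Fin (2 * b - 1) → ZMod 4 // ∀ i j, (x i).val % 2 = (x j).val % 2},
      ∀ v v' : Fin b → ZMod 4,
        ((fun i => 2 * v i) = v') ↔ ((fun i => 2 * (f v).1 i) = (f v').1) := by
  have hn : 0 < 2 * b - 1 := by omega
  refine ⟨?_, ?_, ?_⟩
  · rw [Nat.card_eq_fintype_card, Fintype.card_fun]
    simp
  · rw [Nat.card_congr (parityEquiv (2 * b - 1) hn).symm,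
      Nat.card_eq_fintype_card, Fintype.card_prod, Fintype.card_fun]
    have h2 : Fintype.card (ZMod 2) = 2 := by decide
    have h4 : Fintype.card (Fin (2 * b - 1)) = 2 * b - 1 := by simp
    rw [h2, h4]
    have : 2 * 2 ^ (2 * b - 1) = 2 ^ (2 * b - 1 + 1) := by
      rw [pow_succ]; ring
    rw [this]
    have : 2 * b - 1 + 1 = 2 * b := by omega
    rw [this, pow_mul]
    norm_num
  · rintro ⟨f, hf⟩
    -- three distinct vertices with positive in-degree on the left
    set u₁ : Fin b → ZMod 4 := fun _ => 0 with hu₁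
    set u₂ : Fin b → ZMod 4 := fun i => if i = ⟨0, by omega⟩ then 1 else 0 with hu₂
    set u₃ : Fin b → ZMod 4 := fun _ => 1 with hu₃
    set v₁ : Fin b → ZMod 4 := fun i => 2 * u₁ i with hv₁
    set v₂ : Fin b → ZMod 4 := fun i => 2 * u₂ i with hv₂
    set v₃ : Fin b → ZMod 4 := fun i => 2 * u₃ i with hv₃
    have h12 : v₁ ≠ v₂ := by
      intro h
      have := congrFun h ⟨0, by omega⟩
      simp [hv₁, hv₂, hu₁, hu₂] at this
      exact absurd this (by decide)
    have h13 : v₁ ≠ v₃ := by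
      intro h
      have := congrFun h ⟨0, by omega⟩
      simp [hv₁, hv₃, hu₁, hu₃] at this
      exact absurd this (by decide)
    have h23 : v₂ ≠ v₃ := by
      intro h
      have := congrFun h ⟨1, by omega⟩
      simp [hv₂, hv₃, hu₂, hu₃, Fin.ext_iff] at this
      exact absurd this (by decide)
    -- images under f land in the 2-element image of the doubling map
    have key : ∀ u : Fin b → ZMod 4,
        (f (fun i => 2 * u i)).1 = (fun _ => 0) ∨
        (f (fun i => 2 * u i)).1 = (fun _ => 2) := by
      intro u
      have h := (hf u (fun i => 2 * u i)).1 rfl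
      have hconst : ∀ i, 2 * (f u).1 i = 2 * (f u).1 ⟨0, hn⟩ :=
        fun i => two_mul_eq_of_parity _ _ ((f u).2 i ⟨0, hn⟩)
      rcases two_mul_zero_or_two ((f u).1 ⟨0, hn⟩) with h0 | h2
      · left; rw [← h]; funext i; rw [hconst i, h0]
      · right; rw [← h]; funext i; rw [hconst i, h2]
    have e1 := key u₁
    have e2 := key u₂
    have e3 := key u₃
    have inj : Function.Injective f := f.injective
    rcases e1 with e1 | e1 <;> rcases e2 with e2 | e2 <;> rcases e3 with e3 | e3
    · exact h12 (inj (Subtype.ext (e1.trans e2.symm)))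
    · exact h12 (inj (Subtype.ext (e1.trans e2.symm)))
    · exact h13 (inj (Subtype.ext (e1.trans e3.symm)))
    · exact h23 (inj (Subtype.ext (e2.trans e3.symm)))
    · exact h23 (inj (Subtype.ext (e2.trans e3.symm)))
    · exact h13 (inj (Subtype.ext (e1.trans e3.symm)))
    · exact h12 (inj (Subtype.ext (e1.trans e2.symm)))
    · exact h12 (inj (Subtype.ext (e1.trans e2.symm)))
end

section
/- In Z/4Z, the set of solutions (x₁, x₂, x₃, x₄, x₅, x₆, x₇, x₈) to the linear system encoded by the 8×8 matrix with rows (0,3,3,0,0,0,0,0), (0,0,0,3,3,0,0,0), (0,0,0,0,0,3,3,0), (3,0,0,0,0,0,0,3), (1,0,2,3,0,0,0,0), (0,0,1,0,2,3,0,0), (0,0,0,0,1,0,2,3), (2,3,0,0,0,0,1,0) — i.e., the null space of this matrix acting on (Z/4Z)⁸ — has exactly 16 elements. -/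
open Matrix in
private lemma cons_val_five {α : Type*} {m : ℕ} (x : α) (u : Fin (m+5) → α) :
    vecCons x u 5 = vecHead (vecTail (vecTail (vecTail (vecTail u)))) := rfl

open Matrix in
private lemma cons_val_six {α : Type*} {m : ℕ} (x : α) (u : Fin (m+6) → α) :
    vecCons x u 6 = vecHead (vecTail (vecTail (vecTail (vecTail (vecTail u))))) := rfl

open Matrix in
private lemma cons_val_seven {α : Type*} {m : ℕ} (x : α) (u : Fin (m+7) → α) :
    vecCons x u 7 = vecHead (vecTail (vecTail (vecTail (vecTail (vecTail (vecTail u)))))) := rfl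

private def M : Matrix (Fin 8) (Fin 8) (ZMod 4) :=
  Matrix.of ![![0, 3, 3, 0, 0, 0, 0, 0],
                   ![0, 0, 0, 3, 3, 0, 0, 0],
                   ![0, 0, 0, 0, 0, 3, 3, 0],
                   ![3, 0, 0, 0, 0, 0, 0, 3],
                   ![1, 0, 2, 3, 0, 0, 0, 0],
                   ![0, 0, 1, 0, 2, 3, 0, 0],
                   ![0, 0, 0, 0, 1, 0, 2, 3],
                   ![2, 3, 0, 0, 0, 0, 1, 0]]

private def sol (a b : ZMod 4) : Fin 8 → ZMod 4 :=
  ![a, b, -b, a+2*b, -a-2*b, 2*a+3*b, 2*a+b, -a]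

private lemma sol_mem (a b : ZMod 4) : M.mulVec (sol a b) = 0 := by
  revert a b; decide

private lemma lemA (u v : ZMod 4) (h : 3*u + 3*v = 0) : v = -u := by
  revert u v; decide

private lemma lemB (u v w : ZMod 4) (h : u + 2*v + 3*w = 0) : w = u + 2*v := by
  revert u v w; decide

private lemma hc4 : (4 : ZMod 4) = 0 := by decide

private lemma mem_sol (x : Fin 8 → ZMod 4) (h : M.mulVec x = 0) : x = sol (x 0) (x 1) := by
  have h0 : 3 * x 1 + 3 * x 2 = 0 := by
    have := congrFun h 0
    simpa [M, Matrix.mulVec, dotProduct, Fin.sum_univ_eight,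
      cons_val_five, cons_val_six, cons_val_seven] using this
  have h1 : 3 * x 3 + 3 * x 4 = 0 := by
    have := congrFun h 1
    simpa [M, Matrix.mulVec, dotProduct, Fin.sum_univ_eight,
      cons_val_five, cons_val_six, cons_val_seven] using this
  have h2 : 3 * x 5 + 3 * x 6 = 0 := by
    have := congrFun h 2
    simpa [M, Matrix.mulVec, dotProduct, Fin.sum_univ_eight,
      cons_val_five, cons_val_six, cons_val_seven] using this
  have h3 : 3 * x 0 + 3 * x 7 = 0 := by
    have := congrFun h 3
    simpa [M, Matrix.mulVec, dotProduct, Fin.sum_univ_eight, add_assoc,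
      cons_val_five, cons_val_six, cons_val_seven] using this
  have h4 : x 0 + (2 * x 2 + 3 * x 3) = 0 := by
    have := congrFun h 4
    simpa [M, Matrix.mulVec, dotProduct, Fin.sum_univ_eight, add_assoc,
      cons_val_five, cons_val_six, cons_val_seven] using this
  have h5 : x 2 + (2 * x 4 + 3 * x 5) = 0 := by
    have := congrFun h 5
    simpa [M, Matrix.mulVec, dotProduct, Fin.sum_univ_eight, add_assoc,
      cons_val_five, cons_val_six, cons_val_seven] using this
  have e2 : x 2 = -x 1 := lemA _ _ h0
  have e4 : x 4 = -x 3 := lemA _ _ h1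
  have e6 : x 6 = -x 5 := lemA _ _ h2
  have e7 : x 7 = -x 0 := lemA _ _ h3
  have e3 : x 3 = x 0 + 2 * x 2 := lemB _ _ _ (by linear_combination h4)
  have e5 : x 5 = x 2 + 2 * x 4 := lemB _ _ _ (by linear_combination h5)
  funext i
  fin_cases i
  · show x 0 = sol (x 0) (x 1) 0; rfl
  · show x 1 = sol (x 0) (x 1) 1; rfl
  · show x 2 = sol (x 0) (x 1) 2
    simp only [sol, Matrix.cons_val_two, Matrix.head_cons, Matrix.tail_cons]
    exact e2
  · show x 3 = sol (x 0) (x 1) 3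
    simp only [sol, Matrix.cons_val_three, Matrix.head_cons, Matrix.tail_cons]
    rw [e3, e2]; linear_combination (-(x 1)) * hc4
  · show x 4 = sol (x 0) (x 1) 4
    simp only [sol, Matrix.cons_val_four, Matrix.head_cons, Matrix.tail_cons]
    rw [e4, e3, e2]; linear_combination (x 1) * hc4
  · show x 5 = sol (x 0) (x 1) 5
    simp only [sol, cons_val_five, Matrix.head_cons, Matrix.tail_cons]
    rw [e5, e4, e3, e2]; linear_combination (-(x 0)) * hc4
  · show x 6 = sol (x 0) (x 1) 6
    simp only [sol, cons_val_six, Matrix.head_cons, Matrix.tail_cons]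
    rw [e6, e5, e4, e3, e2]; linear_combination (-(x 1)) * hc4
  · show x 7 = sol (x 0) (x 1) 7
    simp only [sol, cons_val_seven, Matrix.head_cons, Matrix.tail_cons]
    exact e7

/-- The null space in (ℤ/4ℤ)⁸ of the matrix encoding the biquandle coloring conditions
of T(2,4) has exactly 16 elements. -/
theorem t24_coloring_count :
    Nat.card {x : Fin 8 → ZMod 4 //
      (Matrix.of ![![0, 3, 3, 0, 0, 0, 0, 0],
                   ![0, 0, 0, 3, 3, 0, 0, 0],
                   ![0, 0, 0, 0, 0, 3, 3, 0],
                   ![3, 0, 0, 0, 0, 0, 0, 3],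
                   ![1, 0, 2, 3, 0, 0, 0, 0],
                   ![0, 0, 1, 0, 2, 3, 0, 0],
                   ![0, 0, 0, 0, 1, 0, 2, 3],
                   ![2, 3, 0, 0, 0, 0, 1, 0]] : Matrix (Fin 8) (Fin 8) (ZMod 4)).mulVec x
        = 0} = 16 := by
  show Nat.card {x : Fin 8 → ZMod 4 // M.mulVec x = 0} = 16
  have e : (ZMod 4 × ZMod 4) ≃ {x : Fin 8 → ZMod 4 // M.mulVec x = 0} :=
    { toFun := fun p => ⟨sol p.1 p.2, sol_mem p.1 p.2⟩
      invFun := fun x => (x.1 0, x.1 1)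
      left_inv := fun p => by simp [sol]
      right_inv := fun x => by ext1; exact (mem_sol x.1 x.2).symm }
  rw [← Nat.card_congr e]
  simp [Nat.card_eq_fintype_card]
end
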